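/- For every n ≥ 2 there is a constant c_n > 0 (one may take c_n = 1/(n·3^{n−1})) such that for all ε ∈ (0,1), any covering of [−1+ε,1−ε]^n by axis-parallel ellipsoids each contained in [−1,1]^n requires at least c_n · (1 + ⌊log₂(1/ε)⌋)^{n−1} ellipsoids. -/

import Mathlib

/-!
The points whose coordinates are `1 - 2⁻¹ ^ k` with `0 ≤ k ≤ N = ⌊log₂ (1/ε)⌋₊` form a grid of
`(N + 1) ^ n` points in `[-1 + ε, 1 - ε] ^ n`. On a point of an ellipsoid at most one of the terms
`((x j - c j) / a j) ^ 2` exceeds `1/2`. Since the ellipsoid lies in the cube, `c j + a j ≤ 1`, and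
then the window `|x j - c j| ≤ a j / √2` meets at most three of the values `1 - 2⁻¹ ^ k`: the
distances to `1` of two points in it differ by a factor less than `(√2 + 1) ^ 2 < 8`. So one
ellipsoid contains at most `n * 3 ^ (n - 1) * (N + 1)` grid points, and
`m ≥ (N + 1) ^ (n - 1) / (n * 3 ^ (n - 1))`.
-/

open Finset

theorem Finset.card_le_of_forall_le_add {s : Finset ℕ} {d : ℕ}
    (h : ∀ x ∈ s, ∀ y ∈ s, x ≤ y + d) : s.card ≤ d + 1 := by
  rcases s.eq_empty_or_nonempty with rfl | hs
  · simp
  · calc s.card ≤ (Icc (s.min' hs) (s.min' hs + d)).card :=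
          card_le_card fun x hx => mem_Icc.2 ⟨s.min'_le x hx, h x hx _ (s.min'_mem hs)⟩
      _ = d + 1 := by simp; omega

section

variable {ι : Type*} [Fintype ι]

theorem exists_forall_ne_le_half_of_sum_le_one [Nonempty ι] {f : ι → ℝ} (hf : ∀ j, 0 ≤ f j)
    (hsum : ∑ j, f j ≤ 1) : ∃ j₀, ∀ j ≠ j₀, f j ≤ 1 / 2 := by
  classical
  by_contra! h
  obtain ⟨j₁, -, h₁⟩ := h (Classical.arbitrary ι)
  obtain ⟨j₂, hne, h₂⟩ := h j₁
  have := sum_le_sum_of_subset_of_nonneg (subset_univ {j₂, j₁}) fun j _ _ => hf j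
  rw [sum_pair hne] at this
  linarith

theorem card_le_of_forall_exists_forall_ne_mem [DecidableEq ι] {α : Type*} [Fintype α]
    [DecidableEq α] {T : ι → Finset α} {b : ℕ} (hT : ∀ j, (T j).card ≤ b)
    {S : Finset (ι → α)} (hS : ∀ v ∈ S, ∃ j₀, ∀ j ≠ j₀, v j ∈ T j) :
    S.card ≤ Fintype.card ι * (Fintype.card α * b ^ (Fintype.card ι - 1)) := by
  have hsub : S ⊆ univ.biUnion fun j₀ => Fintype.piFinset (Function.update T j₀ univ) := by
    intro v hv
    obtain ⟨j₀, hj₀⟩ := hS v hv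
    refine mem_biUnion.2 ⟨j₀, mem_univ _, Fintype.mem_piFinset.2 fun j => ?_⟩
    rcases eq_or_ne j j₀ with rfl | hj
    · simp
    · simpa [Function.update_of_ne hj] using hj₀ j hj
  refine (card_le_card hsub).trans <| card_biUnion_le.trans ?_
  rw [← smul_eq_mul, ← card_univ (α := ι), ← sum_const]
  refine sum_le_sum fun j₀ _ => ?_
  rw [Fintype.card_piFinset, ← mul_prod_erase _ _ (mem_univ j₀), Function.update_self, card_univ,
    ← card_erase_of_mem (mem_univ j₀)]
  refine Nat.mul_le_mul_left _ (prod_le_pow_card _ _ _ fun j hj => ?_)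
  rw [Function.update_of_ne (ne_of_mem_erase hj)]
  exact hT j

def axisEllipsoid (c a : ι → ℝ) : Set (ι → ℝ) :=
  {x | ∑ j, ((x j - c j) / a j) ^ 2 ≤ 1}

theorem update_add_mem_axisEllipsoid [DecidableEq ι] {c a : ι → ℝ} {j : ι} (ha : a j ≠ 0) :
    Function.update c j (c j + a j) ∈ axisEllipsoid c a := by
  rw [axisEllipsoid, Set.mem_ofPred_eq, sum_eq_single j]
  · simp [ha]
  · intro k _ hk
    simp [Function.update_of_ne hk]
  · simp

end

theorem one_sub_lt_eight_mul_one_sub {c a y y' : ℝ} (ha : 0 < a) (hca : c + a ≤ 1)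
    (hy : ((y - c) / a) ^ 2 ≤ 1 / 2) (hy' : ((y' - c) / a) ^ 2 ≤ 1 / 2) :
    1 - y' < 8 * (1 - y) := by
  rw [div_pow, div_le_iff₀ (by positivity)] at hy hy'
  by_contra! h
  have h7 : 7 * a ≤ 8 * (y - c) - (y' - c) := by linarith
  nlinarith [mul_self_le_mul_self (by positivity) h7, sq_nonneg (y - c + (y' - c))]

theorem le_add_two_of_sq_le_half {c a : ℝ} (ha : 0 < a) (hca : c + a ≤ 1) {k l : ℕ}
    (hk : ((1 - 2⁻¹ ^ k - c) / a) ^ 2 ≤ 1 / 2) (hl : ((1 - 2⁻¹ ^ l - c) / a) ^ 2 ≤ 1 / 2) :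
    l ≤ k + 2 := by
  by_contra! h
  have h8 : 8 * (2⁻¹ : ℝ) ^ l ≤ 2⁻¹ ^ k :=
    calc 8 * (2⁻¹ : ℝ) ^ l ≤ 8 * 2⁻¹ ^ (k + 3) := by
          gcongr 8 * ?_
          exact pow_le_pow_of_le_one (by norm_num) (by norm_num) h
      _ = 2⁻¹ ^ k := by ring
  have := one_sub_lt_eight_mul_one_sub ha hca hl hk
  linarith

theorem card_filter_sq_le_half_le_three (K : ℕ) {c a : ℝ} (ha : 0 < a) (hca : c + a ≤ 1) :
    (univ.filter fun k : Fin K => ((1 - 2⁻¹ ^ (k : ℕ) - c) / a) ^ 2 ≤ 1 / 2).card ≤ 3 := by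
  rw [← card_map Fin.valEmbedding]
  refine card_le_of_forall_le_add fun l hl k hk => ?_
  simp only [mem_map, mem_filter, mem_univ, true_and, Fin.valEmbedding_apply] at hl hk
  obtain ⟨l, hl, rfl⟩ := hl
  obtain ⟨k, hk, rfl⟩ := hk
  exact le_add_two_of_sq_le_half ha hca hk hl

theorem le_inv_two_pow_of_le_floor_logb {ε : ℝ} (hε₀ : 0 < ε) (hε₁ : ε ≤ 1) {k : ℕ}
    (hk : k ≤ ⌊Real.logb 2 (1 / ε)⌋₊) : ε ≤ 2⁻¹ ^ k := by
  have hlog : (k : ℝ) ≤ Real.logb 2 (1 / ε) :=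
    (Nat.cast_le.2 hk).trans (Nat.floor_le (Real.logb_nonneg one_lt_two (one_le_one_div hε₀ hε₁)))
  rw [Real.le_logb_iff_rpow_le one_lt_two (by positivity), Real.rpow_natCast] at hlog
  rw [inv_pow, le_inv_comm₀ hε₀ (by positivity), ← one_div]
  exact hlog

section

variable {ι : Type*} {K : ℕ}

noncomputable def dyadicPoint (v : ι → Fin K) : ι → ℝ :=
  fun j => 1 - 2⁻¹ ^ (v j : ℕ)

theorem card_le_of_forall_dyadicPoint_mem_axisEllipsoid [Fintype ι] [Nonempty ι]
    {c a : ι → ℝ} (ha : ∀ j, 0 < a j) (hca : ∀ j, c j + a j ≤ 1)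
    {S : Finset (ι → Fin K)} (hS : ∀ v ∈ S, dyadicPoint v ∈ axisEllipsoid c a) :
    S.card ≤ Fintype.card ι * (K * 3 ^ (Fintype.card ι - 1)) := by
  classical
  refine (card_le_of_forall_exists_forall_ne_mem
    (fun j => card_filter_sq_le_half_le_three K (ha j) (hca j)) fun v hv => ?_).trans_eq
      (by rw [Fintype.card_fin])
  obtain ⟨j₀, hj₀⟩ := exists_forall_ne_le_half_of_sum_le_one (fun j => sq_nonneg _) (hS v hv)
  exact ⟨j₀, fun j hj => mem_filter.2 ⟨mem_univ _, hj₀ j hj⟩⟩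

theorem dyadicPoint_mem_Icc {ε : ℝ} (hε₀ : 0 < ε) (hε₁ : ε ≤ 1)
    (v : ι → Fin (⌊Real.logb 2 (1 / ε)⌋₊ + 1)) (j : ι) :
    dyadicPoint v j ∈ Set.Icc (-1 + ε) (1 - ε) := by
  have hε := le_inv_two_pow_of_le_floor_logb hε₀ hε₁ (Nat.lt_succ_iff.1 (v j).isLt)
  have h₁ : (2⁻¹ : ℝ) ^ (v j : ℕ) ≤ 1 := pow_le_one₀ (by norm_num) (by norm_num)
  constructor <;> simp only [dyadicPoint] <;> linarith

end

/-- For `n ≥ 2` and `ε ∈ (0,1)`, any covering of `[-1+ε,1-ε]^n` by axis-parallel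
ellipsoids contained in `[-1,1]^n` uses at least
`(1/(n·3^{n-1})) · (1 + ⌊log₂(1/ε)⌋)^{n-1}` ellipsoids. -/
theorem axis_parallel_ellipsoid_covering_lower_bound (n : ℕ) (hn : 2 ≤ n)
    (ε : ℝ) (hε : ε ∈ Set.Ioo (0 : ℝ) 1)
    (m : ℕ) (c a : Fin m → Fin n → ℝ) (ha : ∀ i j, 0 < a i j)
    (hsub : ∀ i, {x : Fin n → ℝ | ∑ j, ((x j - c i j) / a i j) ^ 2 ≤ 1} ⊆
      {x : Fin n → ℝ | ∀ j, -1 ≤ x j ∧ x j ≤ 1})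
    (hcover : {x : Fin n → ℝ | ∀ j, -1 + ε ≤ x j ∧ x j ≤ 1 - ε} ⊆
      ⋃ i, {x : Fin n → ℝ | ∑ j, ((x j - c i j) / a i j) ^ 2 ≤ 1}) :
    (1 / (n * 3 ^ (n - 1)) : ℝ) * (1 + (⌊Real.logb 2 (1 / ε)⌋₊ : ℝ)) ^ (n - 1) ≤ m := by
  classical
  obtain ⟨hε₀, hε₁⟩ := hε
  have : Nonempty (Fin n) := ⟨⟨0, by omega⟩⟩
  set K := ⌊Real.logb 2 (1 / ε)⌋₊ + 1
  let S i := univ.filter fun v : Fin n → Fin K => dyadicPoint v ∈ axisEllipsoid (c i) (a i)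
  have hS i : (S i).card ≤ n * (K * 3 ^ (n - 1)) := by
    have hca j : c i j + a i j ≤ 1 := by
      simpa using (hsub i (update_add_mem_axisEllipsoid (ha i j).ne') j).2
    simpa using card_le_of_forall_dyadicPoint_mem_axisEllipsoid (ha i) hca
      fun v hv => (mem_filter.1 hv).2
  have hcount : K ^ n ≤ m * (n * (K * 3 ^ (n - 1))) :=
    calc K ^ n = (univ : Finset (Fin n → Fin K)).card := by simp
      _ ≤ (univ.biUnion S).card := card_le_card fun v _ => by
          obtain ⟨i, hi⟩ := Set.mem_iUnion.1 (hcover fun j => dyadicPoint_mem_Icc hε₀ hε₁.le v j)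
          exact mem_biUnion.2 ⟨i, mem_univ _, mem_filter.2 ⟨mem_univ _, hi⟩⟩
      _ ≤ ∑ i, (S i).card := card_biUnion_le
      _ ≤ m * (n * (K * 3 ^ (n - 1))) := (sum_le_sum fun i _ => hS i).trans_eq (by simp)
  have hpow : K ^ (n - 1) ≤ m * (n * 3 ^ (n - 1)) := by
    refine Nat.le_of_mul_le_mul_right ?_ (by omega : 0 < K)
    rw [← pow_succ, Nat.sub_add_cancel (by omega : 1 ≤ n)]
    linarith
  rw [div_mul_eq_mul_div, one_mul, div_le_iff₀ (by positivity), add_comm]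
  exact_mod_cast hpow
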